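/- arXiv:2310.09301 — 3 statements merged into one kernel-verified Lean document; each statement's English description precedes it below -/
import Mathlib

section
/- Let γ be a simple closed plane curve. If there exist two disjoint open disks of radius 1 both contained in the inside (the bounded complementary component) of γ, then the diameter of γ is at least 4. -/
/-!
A simple closed plane curve here is an injective (per period), continuous, periodic map
`ℝ → ℝ²`.  Its inside is the union of the bounded connected components of the complement
of its image (by the Jordan curve theorem there is exactly one).
-/

open Metric Set

noncomputable section

/-- The Euclidean plane. -/
abbrev Plane := EuclideanSpace ℝ (Fin 2)

/-- A simple closed plane curve: an injective (per period), continuous, periodic map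
`ℝ → ℝ²`. -/
structure SimpleClosedCurve where
  toFun : ℝ → Plane
  period : ℝ
  period_pos : 0 < period
  periodic : Function.Periodic toFun period
  injOn : Set.InjOn toFun (Set.Ico 0 period)
  continuous : Continuous toFun

namespace SimpleClosedCurve

/-- The image (trace) of the curve. -/
def image (c : SimpleClosedCurve) : Set Plane := Set.range c.toFun

/-- The inside of the curve: the union of the bounded connected components of the
complement of the image. -/
def inside (c : SimpleClosedCurve) : Set Plane :=
  {x | x ∉ c.image ∧ Bornology.IsBounded (connectedComponentIn c.imageᶜ x)}

end SimpleClosedCurve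

/-! The inside lies in the closed convex hull of the curve: a point outside it is strictly
separated from the curve by a line, and the open half-plane beyond that line is a connected,
unbounded region avoiding the curve. Hence the curve's diameter (that of its closed convex hull)
is at least that of two disjoint closed unit disks, and two such disks whose centres are `d ≥ 2`
apart contain antipodal points at distance `d + 2 ≥ 4`. -/

section HalfSpace

variable {E : Type*} [NormedAddCommGroup E] [NormedSpace ℝ E]

theorem StrongDual.not_isBounded_preimage_Ioi {f : StrongDual ℝ E} (hf : f ≠ 0) (u : ℝ) :
    ¬ Bornology.IsBounded (f ⁻¹' Ioi u) := by
  intro hb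
  have hsurj : Function.Surjective f :=
    LinearMap.surjective (f := (f : Module.Dual ℝ E)) fun h ↦ hf (ContinuousLinearMap.coe_inj.1 h)
  have himage := f.lipschitz.isBounded_image hb
  rw [image_preimage_eq _ hsurj] at himage
  exact not_bddAbove_Ioi u himage.bddAbove

theorem not_isBounded_connectedComponentIn_compl_of_notMem_closure_convexHull {s : Set E}
    (hs : s.Nonempty) {z : E} (hz : z ∉ closure (convexHull ℝ s)) :
    ¬ Bornology.IsBounded (connectedComponentIn sᶜ z) := by
  obtain ⟨f, u, hf_hull, hfz⟩ :=
    geometric_hahn_banach_closed_point (convex_convexHull ℝ s).closure isClosed_closure hz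
  have hf_s : ∀ a ∈ s, f a < u := fun a ha ↦ hf_hull a (subset_closure (subset_convexHull ℝ s ha))
  have hf : f ≠ 0 := by
    rintro rfl
    obtain ⟨a, ha⟩ := hs
    exact (hf_s a ha).not_gt hfz
  have half_space_subset : f ⁻¹' Ioi u ⊆ connectedComponentIn sᶜ z :=
    ((convex_Ioi u).linear_preimage (f : E →ₗ[ℝ] ℝ)).isPreconnected.subset_connectedComponentIn
      hfz fun p hp hps ↦ (hf_s p hps).not_gt hp
  exact fun hb ↦ StrongDual.not_isBounded_preimage_Ioi hf u (hb.subset half_space_subset)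

end HalfSpace

section TwoBalls

variable {E : Type*} [NormedAddCommGroup E] [NormedSpace ℝ E]

theorem dist_add_two_mul_le_diam_of_closedBall_subset {K : Set E} (hK : Bornology.IsBounded K)
    {x y : E} (hxy : x ≠ y) {r : ℝ} (hr : 0 ≤ r) (hx : closedBall x r ⊆ K)
    (hy : closedBall y r ⊆ K) : dist x y + 2 * r ≤ diam K := by
  set d := dist x y
  have hd : 0 < d := dist_pos.2 hxy
  have hnorm : ‖x - y‖ = d := (dist_eq_norm x y).symm
  set v := (r / d) • (x - y)
  have hv : ‖v‖ = r := by
    rw [norm_smul, hnorm, Real.norm_of_nonneg (by positivity), div_mul_cancel₀ r hd.ne']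
  have hp : x + v ∈ K := hx (by rw [mem_closedBall, dist_eq_norm, add_sub_cancel_left, hv])
  have hq : y - v ∈ K := hy (by rw [mem_closedBall, dist_eq_norm, sub_sub_cancel_left, norm_neg, hv])
  calc d + 2 * r = ‖(1 + 2 * (r / d)) • (x - y)‖ := by
        rw [norm_smul, hnorm, Real.norm_of_nonneg (by positivity)]
        field_simp
    _ = dist (x + v) (y - v) := by
        rw [dist_eq_norm]
        congr 1
        module
    _ ≤ diam K := dist_le_diam_of_mem hK hp hq

theorem four_mul_le_diam_of_disjoint_ball_subset {K : Set E} (hK : Bornology.IsBounded K)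
    {x y : E} {r : ℝ} (hxy : Disjoint (ball x r) (ball y r)) (hx : ball x r ⊆ K)
    (hy : ball y r ⊆ K) : 4 * r ≤ diam K := by
  rcases le_or_gt r 0 with hr | hr
  · linarith [diam_nonneg (s := K)]
  have hdist : 2 * r ≤ dist x y := by
    rw [two_mul]
    exact (disjoint_ball_ball_iff hr hr).1 hxy
  have hclosedBall {w : E} (hw : ball w r ⊆ K) : closedBall w r ⊆ closure K :=
    closure_ball w hr.ne' ▸ closure_mono hw
  have hne : x ≠ y := dist_pos.1 (by linarith)
  calc 4 * r ≤ dist x y + 2 * r := by linarith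
    _ ≤ diam (closure K) := dist_add_two_mul_le_diam_of_closedBall_subset hK.closure hne hr.le
        (hclosedBall hx) (hclosedBall hy)
    _ = diam K := diam_closure K

end TwoBalls

namespace SimpleClosedCurve

variable (c : SimpleClosedCurve)

theorem isCompact_image : IsCompact c.image := by
  rw [image, ← c.periodic.image_Icc c.period_pos 0]
  exact isCompact_Icc.image c.continuous

theorem inside_subset_closure_convexHull : c.inside ⊆ closure (convexHull ℝ c.image) :=
  fun _z hz ↦ of_not_not fun hz_out ↦
    not_isBounded_connectedComponentIn_compl_of_notMem_closure_convexHull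
      (range_nonempty c.toFun) hz_out hz.2

end SimpleClosedCurve

/-- If the inside of a simple closed plane curve contains two disjoint
open disks of radius `1`, then the diameter of the curve is at least `4`. -/
theorem diam_ge_four_of_two_disjoint_unit_disks_inside
    (c : SimpleClosedCurve)
    (h : ∃ x y : Plane, Disjoint (Metric.ball x 1) (Metric.ball y 1) ∧
      Metric.ball x 1 ⊆ c.inside ∧ Metric.ball y 1 ⊆ c.inside) :
    4 ≤ Metric.diam c.image := by
  obtain ⟨x, y, hxy, hx, hy⟩ := h
  have hbounded : Bornology.IsBounded (closure (convexHull ℝ c.image)) :=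
    (isBounded_convexHull.2 c.isCompact_image.isBounded).closure
  calc (4 : ℝ) = 4 * 1 := (mul_one 4).symm
    _ ≤ diam (closure (convexHull ℝ c.image)) :=
        four_mul_le_diam_of_disjoint_ball_subset hbounded hxy
          (hx.trans c.inside_subset_closure_convexHull) (hy.trans c.inside_subset_closure_convexHull)
    _ = diam c.image := by rw [diam_closure, convexHull_diam]
end
end

section
/- Let γ be a simple closed plane curve of class C², let p and q be two distinct points on γ, and suppose the incircle C_p of γ at p also passes through q. If the radius of C_p is strictly less than the radius of curvature 1/|γ''| of γ at every point of an arc γ₁ of γ between p and q, then the arc γ₁ contains points lying outside the closed disk bounded by C_p. -/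
/-!
Common definitions: a simple closed plane curve of class C², arclength-parametrized;
its inside (the bounded complementary component), the closed region it bounds,
incircles, osculating circles, and supporting from inside.
-/

open Metric Set

noncomputable section

/-- A simple closed plane curve of class C²: an injective (per period), arclength-parametrized,
C², periodic map `ℝ → ℝ²`. -/
structure SimpleClosedCurveC2 where
  toFun : ℝ → Plane
  period : ℝ
  period_pos : 0 < period
  periodic : Function.Periodic toFun period
  injOn : Set.InjOn toFun (Set.Ico 0 period)
  contDiff : ContDiff ℝ 2 toFun
  unitSpeed : ∀ s : ℝ, ‖deriv toFun s‖ = 1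

namespace SimpleClosedCurveC2

/-- The image (trace) of the curve. -/
def image (c : SimpleClosedCurveC2) : Set Plane := Set.range c.toFun

/-- The inside of the curve: the union of the bounded connected components of the
complement of the image (by the Jordan curve theorem there is exactly one). -/
def inside (c : SimpleClosedCurveC2) : Set Plane :=
  {x | x ∉ c.image ∧ Bornology.IsBounded (connectedComponentIn c.imageᶜ x)}

/-- The closed region bounded by the curve: the image together with the inside. -/
def region (c : SimpleClosedCurveC2) : Set Plane := c.image ∪ c.inside

/-- `IsIncircleAt c p center r` means the circle of center `center` and radius `r`
is the incircle of `c` at the point `p`: it passes through `p`, the closed disk it bounds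
lies in the closed region bounded by the curve, and its radius is maximal among all
such circles through `p`. -/
def IsIncircleAt (c : SimpleClosedCurveC2) (p center : Plane) (r : ℝ) : Prop :=
  0 < r ∧ p ∈ Metric.sphere center r ∧ Metric.closedBall center r ⊆ c.region ∧
    ∀ (center' : Plane) (r' : ℝ), p ∈ Metric.sphere center' r' →
      Metric.closedBall center' r' ⊆ c.region → r' ≤ r

/-- Center of the osculating circle at parameter `s` (meaningful when `γ'' s ≠ 0`). -/
def oscCenter (c : SimpleClosedCurveC2) (s : ℝ) : Plane :=
  c.toFun s + (‖deriv (deriv c.toFun) s‖ ^ 2)⁻¹ • deriv (deriv c.toFun) s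

/-- Radius of the osculating circle at parameter `s` (meaningful when `γ'' s ≠ 0`). -/
def oscRadius (c : SimpleClosedCurveC2) (s : ℝ) : ℝ :=
  ‖deriv (deriv c.toFun) s‖⁻¹

/-- The circle with center `center` and radius `r` supports `c` from inside at the
point `q`: the closed disk it bounds is contained in the closed region bounded by the
curve, and the circle meets the curve at `q`. -/
def SupportsFromInside (c : SimpleClosedCurveC2) (center : Plane) (r : ℝ) (q : Plane) : Prop :=
  Metric.closedBall center r ⊆ c.region ∧ q ∈ Metric.sphere center r ∧ q ∈ c.image

end SimpleClosedCurveC2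

/-!
Near each of its points a C² curve has the C¹ chart `(s, t) ↦ γ s + t • N`, `N` the normal, whose
derivative is invertible; by the inverse function theorem and the injectivity of `γ` modulo the
period, near `γ s₀` the curve is exactly the line `t = 0` of this chart. A complementary component
whose closure meets the curve near `γ s₀` therefore contains a whole half-tube `t ≠ 0` of one sign,
so the parameters of the curve points in its closure form a clopen, hence full, subset of `ℝ`.
Applied to the unbounded component, this shows that the curve avoids the interior of the region it
bounds, in particular the open incircle disk. If the arc stayed in the closed disk it would
therefore run along the circle, and differentiating `‖γ - center‖² = r²` twice gives
`⟪γ - center, γ''⟫ = -1`, so `1 ≤ r ‖γ''‖`.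
-/

open RealInnerProductSpace Filter Topology

def perp (v : Plane) : Plane := !₂[-v 1, v 0]

lemma inner_perp_self (v : Plane) : ⟪perp v, v⟫ = 0 := by
  simp [perp, PiLp.inner_apply, Fin.sum_univ_two]; ring

lemma norm_perp (v : Plane) : ‖perp v‖ = ‖v‖ := by
  simp [perp, EuclideanSpace.norm_eq, Fin.sum_univ_two, add_comm]

lemma closure_connectedComponentIn_inter_subset {X : Type*} [TopologicalSpace X] (F : Set X)
    (x : X) : closure (connectedComponentIn F x) ∩ F ⊆ connectedComponentIn F x := by
  rintro y ⟨hy, hyF⟩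
  by_cases hx : x ∈ F
  · have hins : IsPreconnected (insert y (connectedComponentIn F x)) :=
      isPreconnected_connectedComponentIn.subset_closure (subset_insert _ _)
        (insert_subset hy subset_closure)
    exact hins.subset_connectedComponentIn (subset_insert _ _ (mem_connectedComponentIn hx))
      (insert_subset hyF (connectedComponentIn_subset _ _)) (mem_insert _ _)
  · rw [connectedComponentIn_eq_empty hx, closure_empty] at hy
    exact hy.elim

lemma exists_not_isBounded_connectedComponentIn_compl {E : Type*} [NormedAddCommGroup E]
    [NormedSpace ℝ E] [Nontrivial E] {K : Set E} (hK : Bornology.IsBounded K) :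
    ∃ z ∉ K, ¬Bornology.IsBounded (connectedComponentIn Kᶜ z) := by
  obtain ⟨R, hR⟩ := hK.subset_closedBall 0
  obtain ⟨e, he⟩ := exists_norm_eq E zero_le_one
  have hnorm : ∀ t : ℝ, ‖t • e‖ = |t| := fun t => by
    rw [norm_smul, he, mul_one, Real.norm_eq_abs]
  set ray := (fun t : ℝ => t • e) '' Ioi |R|
  have hray : ray ⊆ Kᶜ := by
    rintro _ ⟨t, ht, rfl⟩ htK
    have := mem_closedBall_zero_iff.1 (hR htK)
    rw [hnorm] at this
    linarith [le_abs_self R, le_abs_self t, mem_Ioi.1 ht]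
  have hz : (|R| + 1) • e ∈ ray := ⟨_, mem_Ioi.2 (lt_add_one _), rfl⟩
  refine ⟨_, hray hz, fun hb => ?_⟩
  have hsub : ray ⊆ connectedComponentIn Kᶜ ((|R| + 1) • e) :=
    (isPreconnected_Ioi.image _ (continuous_id.smul continuous_const).continuousOn)
      |>.subset_connectedComponentIn hz hray
  obtain ⟨M, hM⟩ := (hb.subset hsub).subset_closedBall 0
  have hfar : (|R| + |M| + 1) • e ∈ ray :=
    ⟨_, mem_Ioi.2 (by linarith [abs_nonneg M]), rfl⟩
  have := mem_closedBall_zero_iff.1 (hM hfar)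
  rw [hnorm, abs_of_pos (by positivity)] at this
  linarith [le_abs_self M, abs_nonneg R]

theorem one_le_mul_norm_deriv_deriv_of_eventually_mem_sphere {E : Type*} [NormedAddCommGroup E]
    [InnerProductSpace ℝ E] {γ : ℝ → E} {x : E} {r s : ℝ} (hγ : ContDiff ℝ 2 γ)
    (hs : ‖deriv γ s‖ = 1) (hsphere : ∀ᶠ t in 𝓝 s, γ t ∈ sphere x r) :
    1 ≤ r * ‖deriv (deriv γ) s‖ := by
  have hd : ∀ t, HasDerivAt γ (deriv γ t) t := fun t =>
    (hγ.differentiable (by norm_num) t).hasDerivAt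
  have hnorm : (‖γ · - x‖ ^ 2) =ᶠ[𝓝 s] fun _ => r ^ 2 :=
    hsphere.mono fun t ht => by rw [← mem_sphere_iff_norm.1 ht]
  -- differentiating `‖γ - x‖² = r²` once: `γ - x ⟂ γ'` near `s`
  have horth : (fun t => ⟪γ t - x, deriv γ t⟫) =ᶠ[𝓝 s] fun _ => 0 :=
    hnorm.deriv.mono fun t ht => by
      rw [((hd t).sub_const x).norm_sq.deriv, deriv_const] at ht
      linarith
  -- and twice: `⟪γ - x, γ''⟫ = -‖γ'‖² = -1` at `s`
  have hcurv : ⟪γ s - x, deriv (deriv γ) s⟫ = -1 := by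
    have := horth.deriv_eq
    rw [((hd s).sub_const x |>.inner ℝ (hγ.differentiable_deriv_two s).hasDerivAt).deriv,
      deriv_const, real_inner_self_eq_norm_sq, hs] at this
    linarith
  calc (1 : ℝ) = |⟪γ s - x, deriv (deriv γ) s⟫| := by rw [hcurv, abs_neg, abs_one]
    _ ≤ ‖γ s - x‖ * ‖deriv (deriv γ) s‖ := abs_real_inner_le_norm _ _
    _ = r * ‖deriv (deriv γ) s‖ := by rw [mem_sphere_iff_norm.1 hsphere.self_of_nhds]

namespace SimpleClosedCurveC2

variable (c : SimpleClosedCurveC2)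

protected lemma continuous : Continuous c.toFun := c.contDiff.continuous

lemma isCompact_image : IsCompact c.image := by
  rw [image, ← c.periodic.image_Icc c.period_pos 0]
  exact isCompact_Icc.image c.continuous

lemma exists_int_sub_eq_mul_period {s t : ℝ} (h : c.toFun s = c.toFun t) :
    ∃ n : ℤ, t - s = n * c.period := by
  have hmod : ∀ u, c.toFun (toIcoMod c.period_pos 0 u) = c.toFun u := fun u =>
    c.periodic.sub_zsmul_eq _
  have hmem : ∀ u, toIcoMod c.period_pos 0 u ∈ Ico 0 c.period := fun u => by
    simpa using toIcoMod_mem_Ico c.period_pos 0 u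
  obtain ⟨n, hn⟩ := (toIcoMod_eq_toIcoMod c.period_pos).1
    (c.injOn (hmem s) (hmem t) (by rw [hmod, hmod, h]))
  exact ⟨n, by rw [hn, zsmul_eq_mul]⟩

lemma exists_mem_closedBall_of_dist_lt (s₀ : ℝ) {η : ℝ} (hη : 0 < η) :
    ∃ ρ > 0, ∀ w, dist (c.toFun w) (c.toFun s₀) < ρ →
      ∃ m ∈ closedBall s₀ η, c.toFun m = c.toFun w := by
  set K := c.toFun '' Icc (s₀ + η) (s₀ + c.period - η)
  have hK : c.toFun s₀ ∉ K := by
    rintro ⟨x, ⟨hx₁, hx₂⟩, hx⟩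
    obtain ⟨n, hn⟩ := c.exists_int_sub_eq_mul_period hx.symm
    have hT := c.period_pos
    rcases le_or_gt n 0 with h | h
    · have : (n : ℝ) ≤ 0 := by exact_mod_cast h
      nlinarith
    · have : (1 : ℝ) ≤ n := by exact_mod_cast h
      nlinarith
  obtain ⟨ρ, hρ, hball⟩ :=
    Metric.isOpen_iff.1 (isCompact_Icc.image c.continuous).isClosed.isOpen_compl _ hK
  refine ⟨ρ, hρ, fun w hw => ?_⟩
  obtain ⟨m, ⟨hm₁, hm₂⟩, hm⟩ := c.periodic.exists_mem_Ico c.period_pos w (s₀ - η)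
  by_cases hnear : m ≤ s₀ + η
  · exact ⟨m, mem_closedBall.2 (abs_le.2 ⟨by linarith, by linarith⟩), hm.symm⟩
  · exact absurd (hm ▸ ⟨m, ⟨by linarith, by linarith⟩, rfl⟩) (hball (mem_ball.2 hw))

def tubeMap (s₀ : ℝ) (p : ℝ × ℝ) : Plane := c.toFun p.1 + p.2 • perp (deriv c.toFun s₀)

lemma tubeMap_zero (s₀ s : ℝ) : c.tubeMap s₀ (s, 0) = c.toFun s := by
  simp [tubeMap]

lemma contDiff_tubeMap (s₀ : ℝ) : ContDiff ℝ 1 (c.tubeMap s₀) :=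
  ((c.contDiff.of_le (by norm_num)).comp contDiff_fst).add (contDiff_snd.smul contDiff_const)

lemma exists_hasStrictFDerivAt_tubeMap (s₀ : ℝ) :
    ∃ L : (ℝ × ℝ) ≃L[ℝ] Plane,
      HasStrictFDerivAt (c.tubeMap s₀) (L : (ℝ × ℝ) →L[ℝ] Plane) (s₀, 0) := by
  set v := deriv c.toFun s₀
  set L : (ℝ × ℝ) →L[ℝ] Plane :=
    (ContinuousLinearMap.fst ℝ ℝ ℝ).smulRight v +
      (ContinuousLinearMap.snd ℝ ℝ ℝ).smulRight (perp v)
  have hv : ⟪v, v⟫ = 1 := by rw [real_inner_self_eq_norm_sq, c.unitSpeed]; norm_num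
  have hN : ⟪perp v, perp v⟫ = 1 := by
    rw [real_inner_self_eq_norm_sq, norm_perp, c.unitSpeed]; norm_num
  have hvN : ⟪v, perp v⟫ = 0 := by rw [real_inner_comm, inner_perp_self]
  have hL : Function.Injective L := by
    refine (injective_iff_map_eq_zero L).2 fun ⟨a, b⟩ hab => ?_
    have hab' : a • v + b • perp v = 0 := by simpa [L] using hab
    have ha := congrArg (⟪·, v⟫) hab'
    have hb := congrArg (⟪·, perp v⟫) hab'
    simp only [inner_add_left, real_inner_smul_left, hv, hN, inner_perp_self, hvN,
      inner_zero_left] at ha hb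
    simp only [Prod.mk_eq_zero]
    constructor <;> linarith
  have hdim : Module.finrank ℝ (ℝ × ℝ) = Module.finrank ℝ Plane := by simp
  refine ⟨(LinearMap.linearEquivOfInjective (L : (ℝ × ℝ) →ₗ[ℝ] Plane) hL
    hdim).toContinuousLinearEquiv,
    (c.contDiff_tubeMap s₀).contDiffAt.hasStrictFDerivAt' ?_ (by norm_num)⟩
  have hγ : HasDerivAt c.toFun v s₀ := (c.contDiff.differentiable (by norm_num) s₀).hasDerivAt
  have hsnd : HasFDerivAt (fun p : ℝ × ℝ => p.2 • perp v)
      ((ContinuousLinearMap.snd ℝ ℝ ℝ).smulRight (perp v)) (s₀, 0) :=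
    hasFDerivAt_snd.smul_const (perp v)
  refine ((hγ.hasFDerivAt.comp (s₀, 0) hasFDerivAt_fst).add hsnd :
    HasFDerivAt (c.tubeMap s₀) _ _).congr_fderiv ?_
  ext p <;> simp [L]

lemma exists_tubeMap_chart (s₀ : ℝ) :
    ∃ σ > 0, (∀ p ∈ ball s₀ σ ×ˢ ball 0 σ, p.2 ≠ 0 → c.tubeMap s₀ p ∉ c.image) ∧
      c.tubeMap s₀ '' (ball s₀ σ ×ˢ ball 0 σ) ∈ 𝓝 (c.toFun s₀) := by
  obtain ⟨L, hL⟩ := c.exists_hasStrictFDerivAt_tubeMap s₀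
  set e := hL.toOpenPartialHomeomorph (c.tubeMap s₀)
  obtain ⟨η, hη, hηe⟩ :=
    Metric.isOpen_iff.1 e.open_source _ hL.mem_toOpenPartialHomeomorph_source
  obtain ⟨ρ, hρ, hρη⟩ := c.exists_mem_closedBall_of_dist_lt s₀ (half_pos hη)
  have hnhds : ball (s₀, 0) η ∩ c.tubeMap s₀ ⁻¹' ball (c.toFun s₀) ρ ∈ 𝓝 (s₀, (0 : ℝ)) :=
    inter_mem (ball_mem_nhds _ hη)
      ((c.contDiff_tubeMap s₀).continuous.continuousAt.preimage_mem_nhds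
        (by rw [tubeMap_zero]; exact ball_mem_nhds _ hρ))
  obtain ⟨σ, hσ, hσsub⟩ := Metric.mem_nhds_iff.1 hnhds
  rw [← ball_prod_same] at hσsub
  refine ⟨σ, hσ, fun p hp hp0 ⟨w, hw⟩ => hp0 ?_, ?_⟩
  · obtain ⟨m, hm, hmw⟩ := hρη w (hw ▸ (hσsub hp).2)
    have hm' : (m, (0 : ℝ)) ∈ ball (s₀, 0) η := by
      rw [← ball_prod_same]
      exact ⟨(mem_closedBall.1 hm).trans_lt (half_lt_self hη), mem_ball_self hη⟩
    have hmp : (m, (0 : ℝ)) = p :=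
      e.injOn (hηe hm') (hηe (hσsub hp).1) (by simp [e, tubeMap_zero, hmw, hw])
    rw [← hmp]
  · rw [← tubeMap_zero, ← hL.map_nhds_eq_of_equiv]
    exact image_mem_map (ball_prod_same s₀ (0 : ℝ) σ ▸ ball_mem_nhds _ hσ)

lemma eventually_mem_closure_connectedComponentIn {z : Plane} {s₀ : ℝ}
    (h : c.toFun s₀ ∈ closure (connectedComponentIn c.imageᶜ z)) :
    ∀ᶠ s in 𝓝 s₀, c.toFun s ∈ closure (connectedComponentIn c.imageᶜ z) := by
  obtain ⟨σ, hσ, havoid, hnhds⟩ := c.exists_tubeMap_chart s₀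
  obtain ⟨_, ⟨⟨s₁, t₁⟩, ⟨hs₁, ht₁⟩, rfl⟩, hU⟩ := mem_closure_iff_nhds.1 h _ hnhds
  have ht₁0 : t₁ ≠ 0 := by
    rintro rfl
    exact connectedComponentIn_subset _ _ hU ⟨s₁, (c.tubeMap_zero s₀ s₁).symm⟩
  -- the part of the tube on the same side of the curve as `tubeMap s₀ (s₁, t₁)`
  set H := ball s₀ σ ×ˢ Ioc (0 : ℝ) 1
  set φ : ℝ × ℝ → Plane := fun p => c.tubeMap s₀ (p.1, p.2 * t₁)
  have hφ : Continuous φ := (c.contDiff_tubeMap s₀).continuous.comp (by fun_prop)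
  have hφH : φ '' H ⊆ c.imageᶜ := by
    rintro _ ⟨⟨s, x⟩, ⟨hs, hx₀, hx₁⟩, rfl⟩
    refine havoid (s, x * t₁) ⟨hs, ?_⟩ (mul_ne_zero hx₀.ne' ht₁0)
    rw [mem_ball_zero_iff, Real.norm_eq_abs, abs_mul, abs_of_pos hx₀]
    exact (mul_le_of_le_one_left (abs_nonneg _) hx₁).trans_lt (mem_ball_zero_iff.1 ht₁)
  have hHU : φ '' H ⊆ connectedComponentIn c.imageᶜ z := by
    rw [connectedComponentIn_eq hU]
    exact ((isPreconnected_ball.prod isPreconnected_Ioc).image φ hφ.continuousOn)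
      |>.subset_connectedComponentIn ⟨(s₁, 1), ⟨hs₁, one_pos, le_rfl⟩, by simp [φ]⟩ hφH
  filter_upwards [ball_mem_nhds s₀ hσ] with s hs
  have hs0 : (s, (0 : ℝ)) ∈ closure H := by
    rw [closure_prod_eq, closure_Ioc zero_ne_one]
    exact ⟨subset_closure hs, left_mem_Icc.2 zero_le_one⟩
  simpa [φ, tubeMap_zero] using closure_mono hHU (map_mem_closure hφ hs0 (mapsTo_image φ H))

lemma image_subset_closure_connectedComponentIn {z : Plane} (hz : z ∉ c.image) :
    c.image ⊆ closure (connectedComponentIn c.imageᶜ z) := by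
  set U := connectedComponentIn c.imageᶜ z
  have hclopen : IsClopen (c.toFun ⁻¹' closure U) :=
    ⟨isClosed_closure.preimage c.continuous,
      isOpen_iff_mem_nhds.2 fun _ hs => c.eventually_mem_closure_connectedComponentIn hs⟩
  have hU : U ≠ univ := fun hU =>
    connectedComponentIn_subset _ _ (hU ▸ mem_univ (c.toFun 0) : c.toFun 0 ∈ U) ⟨0, rfl⟩
  obtain ⟨x, hx⟩ := nonempty_frontier_iff.2 ⟨⟨z, mem_connectedComponentIn hz⟩, hU⟩
  rw [c.isCompact_image.isClosed.isOpen_compl.connectedComponentIn.frontier_eq] at hx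
  obtain ⟨s, rfl⟩ : x ∈ c.image :=
    not_not.1 fun hxc => hx.2 (closure_connectedComponentIn_inter_subset _ _ ⟨hx.1, hxc⟩)
  rintro _ ⟨t, rfl⟩
  exact (hclopen.eq_univ ⟨s, hx.1⟩ ▸ mem_univ t : t ∈ c.toFun ⁻¹' closure U)

theorem image_subset_closure_compl_region : c.image ⊆ closure c.regionᶜ := by
  obtain ⟨z, hz, hunb⟩ :=
    exists_not_isBounded_connectedComponentIn_compl c.isCompact_image.isBounded
  refine (c.image_subset_closure_connectedComponentIn hz).trans (closure_mono fun x hx => ?_)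
  rintro (hxc | ⟨-, hbdd⟩)
  · exact connectedComponentIn_subset _ _ hx hxc
  · exact hunb (connectedComponentIn_eq hx ▸ hbdd)

theorem disjoint_image_interior_region : Disjoint c.image (interior c.region) := by
  rw [← subset_compl_iff_disjoint_right, ← closure_compl]
  exact c.image_subset_closure_compl_region

end SimpleClosedCurveC2

theorem arc_leaves_incircle_of_radius_lt_curvature_radius_general
    (c : SimpleClosedCurveC2) (center : Plane) (r : ℝ)
    (a b : ℝ) (hab : a < b)
    (hinc : c.IsIncircleAt (c.toFun a) center r)
    (hrad : ∀ s ∈ Set.Icc a b, r * ‖deriv (deriv c.toFun) s‖ < 1) :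
    ∃ s ∈ Set.Icc a b, c.toFun s ∉ Metric.closedBall center r := by
  by_contra! harc
  have hball : ball center r ⊆ interior c.region :=
    interior_maximal (ball_subset_closedBall.trans hinc.2.2.1) isOpen_ball
  have hsphere : ∀ s ∈ Ioo a b, c.toFun s ∈ sphere center r := fun s hs =>
    le_antisymm (harc s (Ioo_subset_Icc_self hs)) <| not_lt.1 fun hlt =>
      c.disjoint_image_interior_region.ne_of_mem ⟨s, rfl⟩ (hball hlt) rfl
  have hmid : (a + b) / 2 ∈ Ioo a b := ⟨by linarith, by linarith⟩
  have := one_le_mul_norm_deriv_deriv_of_eventually_mem_sphere c.contDiff (c.unitSpeed _)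
    (eventually_of_mem (Ioo_mem_nhds hmid.1 hmid.2) hsphere)
  linarith [hrad _ (Ioo_subset_Icc_self hmid)]

/-- Let `γ` be a simple closed plane curve of class C², `p = γ a` and
`q = γ b` two distinct points on it, and suppose the incircle `C_p` of `γ` at `p` also
passes through `q`.  If the radius `r` of `C_p` is strictly less than the radius of
curvature `1/‖γ''‖` at every point of the arc `γ '' [a, b]` (expressed as
`r * ‖γ'' s‖ < 1`, so the condition holds trivially where `γ'' s = 0`), then the arc
contains points outside the closed disk bounded by `C_p`. -/
theorem arc_leaves_incircle_of_radius_lt_curvature_radius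
    (c : SimpleClosedCurveC2) (center : Plane) (r : ℝ)
    (a b : ℝ) (hab : a < b) (hperiod : b - a < c.period)
    (hpq : c.toFun a ≠ c.toFun b)
    (hinc : c.IsIncircleAt (c.toFun a) center r)
    (hq : c.toFun b ∈ Metric.sphere center r)
    (hrad : ∀ s ∈ Set.Icc a b, r * ‖deriv (deriv c.toFun) s‖ < 1) :
    ∃ s ∈ Set.Icc a b, c.toFun s ∉ Metric.closedBall center r :=
  arc_leaves_incircle_of_radius_lt_curvature_radius_general c center r a b hab hinc hrad
end
end

section
/- For every ε > 0 there exists a simple closed plane curve γ with curvature at most 1 at every point, with length greater than 4π − ε, such that no two disjoint open disks of radius 1 are both contained in the inside (the bounded complementary component) of γ. (Such curves are obtained from three unit circles centered at the vertices of an equilateral triangle of side length 2 − l, joined by outer unit-circle arcs, with l > 0 small; their lengths tend to 4π as l → 0.) -/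
/-!
Common definitions: a simple closed plane curve of class C¹, piecewise C²,
arclength-parametrized with period equal to its length; its inside.
-/

open Metric Set

noncomputable section

/-- A simple closed plane curve of class C¹, piecewise C²: an injective (per period),
arclength-parametrized, C¹ periodic map `ℝ → ℝ²` whose derivative fails to be
differentiable at only finitely many points of a period.  Since the parametrization is by
arclength, the period is the length of the curve. -/
structure PiecewiseC2ClosedCurve where
  toFun : ℝ → Plane
  period : ℝ
  period_pos : 0 < period
  periodic : Function.Periodic toFun period
  injOn : Set.InjOn toFun (Set.Ico 0 period)
  contDiff : ContDiff ℝ 1 toFun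
  unitSpeed : ∀ s : ℝ, ‖deriv toFun s‖ = 1
  piecewiseC2 : {s ∈ Set.Ico (0 : ℝ) period | ¬ DifferentiableAt ℝ (deriv toFun) s}.Finite

namespace PiecewiseC2ClosedCurve

/-- The image (trace) of the curve. -/
def image (c : PiecewiseC2ClosedCurve) : Set Plane := Set.range c.toFun

/-- The length of the curve: the period of its arclength parametrization. -/
def length (c : PiecewiseC2ClosedCurve) : ℝ := c.period

/-- The inside of the curve: the union of the bounded connected components of the
complement of the image (by the Jordan curve theorem there is exactly one). -/
def inside (c : PiecewiseC2ClosedCurve) : Set Plane :=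
  {x | x ∉ c.image ∧ Bornology.IsBounded (connectedComponentIn c.imageᶜ x)}

/-- The curvature of the curve is at most `1` wherever it is defined. -/
def CurvatureLEOne (c : PiecewiseC2ClosedCurve) : Prop :=
  ∀ s : ℝ, DifferentiableAt ℝ (deriv c.toFun) s → ‖deriv (deriv c.toFun) s‖ ≤ 1

end PiecewiseC2ClosedCurve

/-!
A circle of radius `r ∈ [1, 2)` has curvature `1 / r ≤ 1` and length `2πr`, which tends to
`4π` as `r → 2`. Its inside lies in the closed disk of radius `r`, and the centres of two unit
disks inside a disk of radius `r` are at distance at most `2 (r - 1) < 2`, so the disks meet.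
-/

section Geometry

variable {E : Type*} [NormedAddCommGroup E] [NormedSpace ℝ E]

open Filter in
theorem not_isBounded_connectedComponentIn_compl_of_subset_closedBall {s : Set E} {r : ℝ}
    (hr : 0 ≤ r) (hs : s ⊆ closedBall 0 r) {x : E} (hx : r < ‖x‖) :
    ¬ Bornology.IsBounded (connectedComponentIn sᶜ x) := by
  set ray := (fun t : ℝ => t • x) '' Ici 1
  have hnorm : ∀ t ∈ Ici (1 : ℝ), ‖t • x‖ = t * ‖x‖ := fun t ht ↦ by
    rw [norm_smul, Real.norm_of_nonneg (zero_le_one.trans ht)]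
  have hray : ray ⊆ connectedComponentIn sᶜ x := by
    refine (isPreconnected_Ici.image _ (by fun_prop)).subset_connectedComponentIn
      ⟨1, self_mem_Ici, one_smul ℝ x⟩ ?_
    rintro _ ⟨t, ht, rfl⟩ hts
    have := mem_closedBall_zero_iff.1 (hs hts)
    rw [hnorm t ht] at this
    nlinarith [mem_Ici.1 ht]
  intro hbdd
  obtain ⟨M, hM⟩ := (hbdd.subset hray).exists_norm_le
  obtain ⟨t, ht, htM⟩ := ((eventually_ge_atTop 1).and
    ((tendsto_id.atTop_mul_const (hr.trans_lt hx)).eventually_gt_atTop M)).exists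
  have := hM _ ⟨t, ht, rfl⟩
  rw [hnorm t ht] at this
  exact lt_irrefl M (htM.trans_le this)

theorem dist_add_le_of_ball_subset_closedBall [Nontrivial E] {z c : E} {a r : ℝ} (ha : 0 < a)
    (h : ball z a ⊆ closedBall c r) : dist z c + a ≤ r := by
  obtain ⟨w, hw, hzw⟩ : ∃ w : E, ‖w‖ = a ∧ SameRay ℝ (z - c) w := by
    rcases eq_or_ne (z - c) 0 with hzc | hzc
    · obtain ⟨w, hw⟩ := exists_norm_eq E ha.le
      exact ⟨w, hw, hzc ▸ SameRay.zero_left w⟩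
    · refine ⟨(a / ‖z - c‖) • (z - c), ?_,
        SameRay.sameRay_nonneg_smul_right _ (by positivity)⟩
      rw [norm_smul, Real.norm_of_nonneg (by positivity),
        div_mul_cancel₀ _ (norm_ne_zero_iff.2 hzc)]
  have hmem : z + w ∈ closedBall c r :=
    closure_minimal h isClosed_closedBall <| by
      rw [closure_ball z ha.ne', mem_closedBall, dist_eq_norm, add_sub_cancel_left, hw]
  rw [mem_closedBall, dist_eq_norm, add_sub_right_comm, hzw.norm_add, hw] at hmem
  rwa [dist_eq_norm]

theorem not_disjoint_ball_ball_of_subset_closedBall [Nontrivial E] {x y c : E} {a b r : ℝ}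
    (ha : 0 < a) (hb : 0 < b) (hr : r < a + b) (hx : ball x a ⊆ closedBall c r)
    (hy : ball y b ⊆ closedBall c r) : ¬ Disjoint (ball x a) (ball y b) := by
  rw [disjoint_ball_ball_iff ha hb, not_le]
  have := dist_add_le_of_ball_subset_closedBall ha hx
  have := dist_add_le_of_ball_subset_closedBall hb hy
  linarith [dist_triangle_right x y c]

end Geometry

namespace PiecewiseC2ClosedCurve

theorem inside_subset_closedBall (c : PiecewiseC2ClosedCurve) {r : ℝ} (hr : 0 ≤ r)
    (h : c.image ⊆ closedBall 0 r) : c.inside ⊆ closedBall 0 r := fun _ hx ↦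
  mem_closedBall_zero_iff.2 <| not_lt.1 fun hlt ↦
    not_isBounded_connectedComponentIn_compl_of_subset_closedBall hr h hlt hx.2

end PiecewiseC2ClosedCurve

open Complex Real

theorem hasDerivAt_circleMap_div (c : ℂ) (R r s : ℝ) :
    HasDerivAt (fun s ↦ circleMap c R (s / r)) (circleMap 0 (R / r) (s / r) * I) s := by
  have h := (hasDerivAt_circleMap c R (s / r)).scomp s ((hasDerivAt_id s).div_const r)
  refine h.congr_deriv ?_
  simp only [circleMap, zero_add, ofReal_div, real_smul, one_div, ofReal_inv]
  ring

abbrev complexToPlane : ℂ ≃ₗᵢ[ℝ] Plane := orthonormalBasisOneI.repr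

def circleArclength (r s : ℝ) : Plane := complexToPlane (circleMap 0 r (s / r))

section circleArclength

variable {r : ℝ}

theorem hasDerivAt_circleArclength (hr : r ≠ 0) (s : ℝ) :
    HasDerivAt (circleArclength r) (complexToPlane (circleMap 0 1 (s / r) * I)) s := by
  have h := hasDerivAt_circleMap_div 0 r r s
  rw [div_self hr] at h
  exact complexToPlane.toContinuousLinearEquiv.hasFDerivAt.comp_hasDerivAt s h

theorem deriv_circleArclength (hr : r ≠ 0) :
    deriv (circleArclength r) = fun s ↦ complexToPlane (circleMap 0 1 (s / r) * I) :=
  funext fun s ↦ (hasDerivAt_circleArclength hr s).deriv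

theorem hasDerivAt_deriv_circleArclength (hr : r ≠ 0) (s : ℝ) :
    HasDerivAt (deriv (circleArclength r))
      (complexToPlane (circleMap 0 (1 / r) (s / r) * I * I)) s := by
  rw [deriv_circleArclength hr]
  exact complexToPlane.toContinuousLinearEquiv.hasFDerivAt.comp_hasDerivAt s
    ((hasDerivAt_circleMap_div 0 1 r s).mul_const I)

theorem range_circleArclength (hr : 0 < r) : range (circleArclength r) = sphere 0 r := by
  have hsurj : Function.Surjective fun s : ℝ ↦ s / r := fun θ ↦ ⟨θ * r, by field_simp⟩
  change range (complexToPlane ∘ circleMap 0 r ∘ fun s ↦ s / r) = _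
  rw [range_comp, range_comp, hsurj.range_eq, image_univ, range_circleMap,
    LinearIsometryEquiv.image_sphere, map_zero, abs_of_pos hr]

end circleArclength

namespace PiecewiseC2ClosedCurve

def circle (r : ℝ) (hr : 0 < r) : PiecewiseC2ClosedCurve where
  toFun := circleArclength r
  period := 2 * π * r
  period_pos := by positivity
  periodic s := by
    rw [circleArclength, circleArclength, add_div, mul_div_cancel_right₀ _ hr.ne',
      periodic_circleMap 0 r (s / r)]
  injOn s hs t ht hst := by
    have hdiv : ∀ u ∈ Ico 0 (2 * π * r), u / r ∈ Ico 0 (2 * π) := fun u hu ↦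
      ⟨div_nonneg hu.1 hr.le, (div_lt_iff₀ hr).2 hu.2⟩
    exact (div_left_inj' hr.ne').1 <| injOn_circleMap_of_abs_sub_le' hr.ne' (sub_zero _).le
      (hdiv s hs) (hdiv t ht) (complexToPlane.injective hst)
  contDiff := complexToPlane.toContinuousLinearEquiv.contDiff.comp
    ((contDiff_circleMap 0 r).comp (contDiff_id.div_const r))
  unitSpeed s := by
    rw [(hasDerivAt_circleArclength hr.ne' s).deriv, LinearIsometryEquiv.norm_map, norm_mul,
      norm_circleMap_zero, norm_I, abs_one, mul_one]
  piecewiseC2 := by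
    convert finite_empty
    exact sep_eq_empty_iff_mem_false.2 fun s _ hs ↦
      hs (hasDerivAt_deriv_circleArclength hr.ne' s).differentiableAt

theorem length_circle (r : ℝ) (hr : 0 < r) : (circle r hr).length = 2 * π * r := rfl

theorem image_circle (r : ℝ) (hr : 0 < r) : (circle r hr).image = sphere 0 r :=
  range_circleArclength hr

theorem inside_circle_subset_closedBall (r : ℝ) (hr : 0 < r) :
    (circle r hr).inside ⊆ closedBall 0 r :=
  inside_subset_closedBall _ hr.le ((image_circle r hr).trans_subset sphere_subset_closedBall)

theorem curvatureLEOne_circle {r : ℝ} (hr : 1 ≤ r) :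
    (circle r (one_pos.trans_le hr)).CurvatureLEOne := fun s _ ↦ by
  rw [circle, (hasDerivAt_deriv_circleArclength (one_pos.trans_le hr).ne' s).deriv,
    LinearIsometryEquiv.norm_map, norm_mul, norm_mul, norm_circleMap_zero, norm_I, mul_one,
    mul_one, abs_of_pos (by positivity)]
  exact div_le_one_of_le₀ hr (zero_le_one.trans hr)

end PiecewiseC2ClosedCurve

open PiecewiseC2ClosedCurve in
/-- For every `ε > 0` there is a simple closed plane curve (C¹, piecewise
C²) with curvature at most `1` everywhere it is defined and length greater than `4π - ε`,
such that no two disjoint open disks of radius `1` are both contained in its inside. -/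
theorem exists_curve_length_near_four_pi_without_two_disjoint_unit_disks :
    ∀ ε : ℝ, 0 < ε → ∃ c : PiecewiseC2ClosedCurve, c.CurvatureLEOne ∧
      4 * Real.pi - ε < c.length ∧
      ¬ ∃ x y : Plane, Disjoint (Metric.ball x 1) (Metric.ball y 1) ∧
        Metric.ball x 1 ⊆ c.inside ∧ Metric.ball y 1 ⊆ c.inside := by
  intro ε hε
  set r := max 1 (2 - ε / (4 * π))
  have hr₁ : 1 ≤ r := le_max_left _ _
  have hr₂ : r < 2 := max_lt one_lt_two (by linarith [div_pos hε (by positivity : 0 < 4 * π)])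
  refine ⟨circle r _, curvatureLEOne_circle hr₁, ?_, ?_⟩
  · calc 4 * π - ε < 2 * π * (2 - ε / (4 * π)) := by field_simp; linarith
      _ ≤ (circle r _).length := by rw [length_circle]; gcongr; exact le_max_right _ _
  · rintro ⟨x, y, hxy, hx, hy⟩
    have hinside := inside_circle_subset_closedBall r (one_pos.trans_le hr₁)
    exact not_disjoint_ball_ball_of_subset_closedBall one_pos one_pos (by linarith)
      (hx.trans hinside) (hy.trans hinside) hxy
end
end
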